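/- arXiv:2602.08362 — 5 statements merged into one kernel-verified Lean document; each statement's English description precedes it below -/
import Mathlib

section
/- For lists of Booleans, the merge operation defined recursively by: Merge([a],[b]) = [a ∨ b, a ∧ b], and for lists of even length m, Merge(A,B) computed by merging the odd-indexed elements of A and B into C, merging the even-indexed elements into D, and outputting [C[1], C[2]∨D[1], C[2]∧D[1], ..., C[m]∨D[m-1], C[m]∧D[m-1], D[m]], satisfies: if A and B are sorted in non-increasing order (with true > false), then Merge(A,B) is a sorted permutation-with-multiplicity of A ++ B (i.e., a sorted list with the same multiset of elements). -/
/-!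
A non-increasing Boolean list is `true^t false^f`. Its odd and even positions are again of this
form, with `⌈t/2⌉` and `⌊t/2⌋` trues, so by induction the two recursive merges `C` and `D` are
sorted with `c = ⌈t/2⌉ + ⌈t'/2⌉` and `d = ⌊t/2⌋ + ⌊t'/2⌋` trues. As `d ≤ c ≤ d + 2`, comparing
`C[i+1]` with `D[i]` mixes a `true` and a `false` in at most one pair, and the output is
`true^(t+t') false^(f+f')`.
-/

/-- Elements at odd (1-based) positions 1,3,5,... -/
def oddIdx {α : Type*} : List α → List α
  | [] => []
  | [a] => [a]
  | a :: _ :: t => a :: oddIdx t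

/-- Elements at even (1-based) positions 2,4,6,... -/
def evenIdx {α : Type*} : List α → List α
  | [] => []
  | [_] => []
  | _ :: b :: t => b :: evenIdx t

/-- The weaving step: pairs `(C[i], D[i-1])` for `i = 2..m` become
`C[i] ∨ D[i-1], C[i] ∧ D[i-1]`, and the last element of `D` is appended. -/
def zipCmp : List Bool → List Bool → List Bool
  | c :: cs, d :: ds => (c || d) :: (c && d) :: zipCmp cs ds
  | [], ds => ds
  | cs, [] => cs

/-- Batcher's odd-even merge of two lists of length `2 ^ k`. -/
def omerge : ℕ → List Bool → List Bool → List Bool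
  | 0, A, B =>
    match A, B with
    | [a], [b] => [a || b, a && b]
    | A, B => A ++ B
  | k + 1, A, B =>
    match omerge k (oddIdx A) (oddIdx B), omerge k (evenIdx A) (evenIdx B) with
    | [], D => D
    | c :: cs, D => c :: zipCmp cs D

def weave : List Bool → List Bool → List Bool
  | [], D => D
  | c :: cs, D => c :: zipCmp cs D

theorem omerge_succ (k : ℕ) (A B : List Bool) :
    omerge (k + 1) A B =
      weave (omerge k (oddIdx A) (oddIdx B)) (omerge k (evenIdx A) (evenIdx B)) := rfl

section OddEven

variable {α : Type*}

@[simp]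
theorem evenIdx_cons : ∀ (a : α) (l : List α), evenIdx (a :: l) = oddIdx l
  | _, [] => rfl
  | _, [_] => rfl
  | _, _ :: _ :: t => by rw [evenIdx, oddIdx, evenIdx_cons _ t]

@[simp]
theorem oddIdx_cons (a : α) (l : List α) : oddIdx (a :: l) = a :: evenIdx l := by
  cases l with
  | nil => rfl
  | cons b t => rw [oddIdx, evenIdx_cons]

theorem oddIdx_replicate_and_evenIdx_replicate (n : ℕ) (a : α) :
    oddIdx (List.replicate n a) = List.replicate ((n + 1) / 2) a ∧
      evenIdx (List.replicate n a) = List.replicate (n / 2) a := by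
  induction n with
  | zero => exact ⟨rfl, rfl⟩
  | succ n ih =>
    rw [List.replicate_succ, oddIdx_cons, evenIdx_cons, ih.1, ih.2,
      show (n + 1 + 1) / 2 = n / 2 + 1 by omega, List.replicate_succ]
    exact ⟨rfl, rfl⟩

theorem oddIdx_append_and_evenIdx_append (l₁ l₂ : List α) :
    oddIdx (l₁ ++ l₂) = oddIdx l₁ ++ (if Even l₁.length then oddIdx l₂ else evenIdx l₂) ∧
      evenIdx (l₁ ++ l₂) = evenIdx l₁ ++ (if Even l₁.length then evenIdx l₂ else oddIdx l₂) := by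
  induction l₁ with
  | nil => exact ⟨rfl, rfl⟩
  | cons a t ih =>
    by_cases h : Even t.length <;> simp [ih.1, ih.2, h, Nat.even_add_one]

end OddEven

def sortedBools (t f : ℕ) : List Bool := List.replicate t true ++ List.replicate f false

theorem oddIdx_sortedBools {t f : ℕ} (h : t % 2 = f % 2) :
    oddIdx (sortedBools t f) = sortedBools ((t + 1) / 2) (f / 2) := by
  rw [sortedBools, (oddIdx_append_and_evenIdx_append _ _).1, List.length_replicate,
    (oddIdx_replicate_and_evenIdx_replicate t true).1]
  split_ifs with ht
  · rw [(oddIdx_replicate_and_evenIdx_replicate f false).1, sortedBools]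
    congr 2
    grind
  · rw [(oddIdx_replicate_and_evenIdx_replicate f false).2, sortedBools]

theorem evenIdx_sortedBools {t f : ℕ} (h : t % 2 = f % 2) :
    evenIdx (sortedBools t f) = sortedBools (t / 2) ((f + 1) / 2) := by
  rw [sortedBools, (oddIdx_append_and_evenIdx_append _ _).2, List.length_replicate,
    (oddIdx_replicate_and_evenIdx_replicate t true).2]
  split_ifs with ht
  · rw [(oddIdx_replicate_and_evenIdx_replicate f false).2, sortedBools]
    congr 2
    grind
  · rw [(oddIdx_replicate_and_evenIdx_replicate f false).1, sortedBools]

theorem zipCmp_replicate_false (x y : ℕ) :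
    zipCmp (List.replicate x false) (List.replicate y false) = List.replicate (x + y) false := by
  induction x generalizing y with
  | zero => simp [zipCmp]
  | succ x ih =>
    cases y with
    | zero => simp [zipCmp]
    | succ y =>
      rw [List.replicate_succ, List.replicate_succ, zipCmp, ih,
        show x + 1 + (y + 1) = x + y + 1 + 1 by omega, List.replicate_succ, List.replicate_succ]
      rfl

theorem zipCmp_sortedBools {p q : ℕ} (x y : ℕ) (hpq : p ≤ q + 1) (hqp : q ≤ p + 1) :
    zipCmp (sortedBools p x) (sortedBools q y) = sortedBools (p + q) (x + y) := by
  induction p generalizing q with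
  | zero =>
    obtain rfl | rfl : q = 0 ∨ q = 1 := by omega
    · exact zipCmp_replicate_false x y
    · cases x with
      | zero => simp [sortedBools, zipCmp]
      | succ x =>
        simp [sortedBools, List.replicate_succ, zipCmp, zipCmp_replicate_false,
          Nat.add_right_comm x 1]
  | succ p ih =>
    cases q with
    | zero =>
      obtain rfl : p = 0 := by omega
      cases y <;> simp [sortedBools, List.replicate_succ, zipCmp, zipCmp_replicate_false,
        ← Nat.add_assoc]
    | succ q =>
      rw [show p + 1 + (q + 1) = p + q + 1 + 1 by omega]
      simp only [sortedBools, List.replicate_succ, List.cons_append, zipCmp, Bool.or_self,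
        Bool.and_self]
      rw [← sortedBools, ← sortedBools, ih (by omega) (by omega), sortedBools]

theorem weave_sortedBools {c d : ℕ} (x y : ℕ) (hdc : d ≤ c) (hcd : c ≤ d + 2) :
    weave (sortedBools c x) (sortedBools d y) = sortedBools (c + d) (x + y) := by
  cases c with
  | zero =>
    obtain rfl : d = 0 := by omega
    cases x <;>
      simp [weave, sortedBools, List.replicate_succ, zipCmp_replicate_false, Nat.add_right_comm _ 1]
  | succ c =>
    rw [show c + 1 + d = c + d + 1 by omega]
    exact congrArg (true :: ·) (zipCmp_sortedBools x y (by omega) (by omega))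

theorem omerge_sortedBools (k : ℕ) {t f t' f' : ℕ} (h : t + f = 2 ^ k) (h' : t' + f' = 2 ^ k) :
    omerge k (sortedBools t f) (sortedBools t' f') = sortedBools (t + t') (f + f') := by
  induction k generalizing t f t' f' with
  | zero =>
    rcases (by omega : (t = 0 ∧ f = 1) ∨ (t = 1 ∧ f = 0)) with ⟨rfl, rfl⟩ | ⟨rfl, rfl⟩ <;>
      rcases (by omega : (t' = 0 ∧ f' = 1) ∨ (t' = 1 ∧ f' = 0)) with ⟨rfl, rfl⟩ | ⟨rfl, rfl⟩ <;>
      rfl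
  | succ k ih =>
    rw [pow_succ] at h h'
    rw [omerge_succ, oddIdx_sortedBools (by omega), oddIdx_sortedBools (by omega),
      evenIdx_sortedBools (by omega), evenIdx_sortedBools (by omega),
      ih (by omega) (by omega), ih (by omega) (by omega),
      weave_sortedBools _ _ (by omega) (by omega)]
    congr 1 <;> omega

theorem length_sortedBools (t f : ℕ) : (sortedBools t f).length = t + f := by
  simp [sortedBools]

theorem pairwise_sortedBools (t f : ℕ) : (sortedBools t f).Pairwise (· ≥ ·) := by
  simp [sortedBools, List.pairwise_append, List.pairwise_replicate]

theorem sortedBools_add_perm (t f t' f' : ℕ) :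
    (sortedBools (t + t') (f + f')).Perm (sortedBools t f ++ sortedBools t' f') := by
  rw [List.perm_iff_count]
  intro b
  cases b <;> simp [sortedBools, List.count_replicate]

theorem exists_eq_sortedBools_of_pairwise :
    ∀ {l : List Bool}, l.Pairwise (· ≥ ·) → ∃ t f, l = sortedBools t f
  | [], _ => ⟨0, 0, rfl⟩
  | true :: _, h =>
    have ⟨t, f, hl⟩ := exists_eq_sortedBools_of_pairwise (List.pairwise_cons.1 h).2
    ⟨t + 1, f, by rw [hl]; rfl⟩
  | false :: l, h => by
    refine ⟨0, l.length + 1, ?_⟩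
    simp only [sortedBools, List.replicate_zero, List.nil_append, List.replicate_succ,
      List.cons.injEq, true_and]
    exact List.eq_replicate_iff.2 ⟨rfl, fun b hb => le_bot_iff.1 ((List.pairwise_cons.1 h).1 b hb)⟩

/-- If `A` and `B` are sorted non-increasingly (true > false), then their odd-even merge
is sorted and is a permutation of `A ++ B` (same multiset of elements). -/
theorem stmt0 (k : ℕ) (A B : List Bool)
    (hA : A.length = 2 ^ k) (hB : B.length = 2 ^ k)
    (hsA : A.Pairwise (· ≥ ·)) (hsB : B.Pairwise (· ≥ ·)) :
    (omerge k A B).Pairwise (· ≥ ·) ∧ (omerge k A B).Perm (A ++ B) := by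
  obtain ⟨t, f, rfl⟩ := exists_eq_sortedBools_of_pairwise hsA
  obtain ⟨t', f', rfl⟩ := exists_eq_sortedBools_of_pairwise hsB
  rw [length_sortedBools] at hA hB
  rw [omerge_sortedBools k hA hB]
  exact ⟨pairwise_sortedBools _ _, sortedBools_add_perm t f t' f'⟩
end

section
/- Let Δ be a monotone, or-decomposable NNF formula over discrete variables, and define rob(Δ) recursively: rob(true) = ∞, rob(false) = 0, rob(literal) = 1, rob(α ∧ β) = min(rob(α), rob(β)), rob(α ∨ β) = rob(α) + rob(β). Then rob(Δ) equals the minimum number of variables in any prime implicate of Δ (and ∞ if Δ is valid, 0 if Δ is unsatisfiable). -/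
/-- NNF formulas over discrete variables `V` with state spaces `S v`:
true, false, literals (sets of states of a variable), conjunction and disjunction. -/
inductive NNF (V : Type) (S : V → Type) : Type
  | tru : NNF V S
  | fls : NNF V S
  | lit : (X : V) → Set (S X) → NNF V S
  | conj : NNF V S → NNF V S → NNF V S
  | disj : NNF V S → NNF V S → NNF V S

namespace NNF

variable {V : Type} {S : V → Type}

def sat : NNF V S → (∀ v, S v) → Prop
  | tru, _ => True
  | fls, _ => False
  | lit X s, w => w X ∈ s
  | conj a b, w => a.sat w ∧ b.sat w
  | disj a b, w => a.sat w ∨ b.sat w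

def vars : NNF V S → Set V
  | tru => ∅
  | fls => ∅
  | lit X _ => {X}
  | conj a b => a.vars ∪ b.vars
  | disj a b => a.vars ∪ b.vars

def lits : NNF V S → Set (Σ X : V, Set (S X))
  | tru => ∅
  | fls => ∅
  | lit X s => {⟨X, s⟩}
  | conj a b => a.lits ∪ b.lits
  | disj a b => a.lits ∪ b.lits

/-- Monotone: for each variable `X`, all `X`-literals appearing are simple
(single-state) and equal to each other. -/
def IsMonotone (Δ : NNF V S) : Prop :=
  ∀ (X : V) (s : Set (S X)), (⟨X, s⟩ : Σ X : V, Set (S X)) ∈ Δ.lits →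
    (∃ a : S X, s = {a}) ∧ ∀ s' : Set (S X), (⟨X, s'⟩ : Σ X : V, Set (S X)) ∈ Δ.lits → s' = s

/-- Or-decomposable: the disjuncts of every disjunction share no variables. -/
def IsDecomposable : NNF V S → Prop
  | tru => True
  | fls => True
  | lit _ _ => True
  | conj a b => a.IsDecomposable ∧ b.IsDecomposable
  | disj a b => a.IsDecomposable ∧ b.IsDecomposable ∧ a.vars ∩ b.vars = ∅

/-- `rob(true) = ∞`, `rob(false) = 0`, `rob(literal) = 1`,
`rob(α ∧ β) = min(rob α, rob β)`, `rob(α ∨ β) = rob α + rob β`. -/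
noncomputable def rob : NNF V S → ℕ∞
  | tru => ⊤
  | fls => 0
  | lit _ _ => 1
  | conj a b => min a.rob b.rob
  | disj a b => a.rob + b.rob

end NNF

/-- A clause over discrete variables: for each variable, a set of its states
(empty = variable not mentioned); the clause is the disjunction of its literals. -/
def Clause (V : Type) (S : V → Type) : Type := ∀ v, Set (S v)

def csat {V : Type} {S : V → Type} (c : Clause V S) (w : ∀ v, S v) : Prop := ∃ v, w v ∈ c v

def cvars {V : Type} {S : V → Type} (c : Clause V S) : Set V := {v | c v ≠ ∅}

def cvalid {V : Type} {S : V → Type} (c : Clause V S) : Prop := ∀ w : ∀ v, S v, csat c w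

/-- An implicate of `Δ`: a non-valid clause entailed by `Δ`. -/
def Implicate {V : Type} {S : V → Type} (Δ : NNF V S) (c : Clause V S) : Prop :=
  ¬ cvalid c ∧ ∀ w : ∀ v, S v, Δ.sat w → csat c w

/-- A prime implicate: an implicate not strictly entailed by any other implicate. -/
def PrimeImplicate {V : Type} {S : V → Type} (Δ : NNF V S) (c : Clause V S) : Prop :=
  Implicate Δ c ∧ ∀ c' : Clause V S, Implicate Δ c' →
    (∀ w : ∀ v, S v, csat c' w → csat c w) → (∀ w : ∀ v, S v, csat c w → csat c' w)

/-!
Monotonicity fixes a state `a X` for every variable `X` such that every literal of `Δ` is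
`X = a X`. By or-decomposability, `rob Δ` is then the least size of a set `I` of variables such
that every assignment deviating from `a` on all of `I` falsifies `Δ`, i.e. such that `Δ` entails
the clause `⋁_{X ∈ I} X = a X`. A prime implicate `c` mentions only variables of `Δ`, and an
assignment that agrees with `a` outside `cvars c` and falsifies `c` falsifies `Δ`, so
`rob Δ ≤ |cvars c|`. Conversely, an inclusion-minimal such `I` gives a prime implicate with `I`
as its set of variables.
-/

lemma Set.Finite.exists_subset_minimal {α : Type*} {P : Set α → Prop} {s : Set α}
    (hs : s.Finite) (hP : P s) : ∃ t ⊆ s, Minimal P t := by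
  obtain ⟨t, hts, ht⟩ := (hs.finite_subsets.subset (Set.inter_subset_left (t := {t | P t}))
    ).exists_le_minimal (a := s) ⟨Set.Subset.rfl, hP⟩
  exact ⟨t, hts, ht.1.2, fun u hu hut => ht.2 ⟨hut.trans ht.1.1, hu⟩ hut⟩

section Clause

variable {V : Type} {S : V → Type}

def eqClause (a : ∀ v, S v) (I : Set V) : Clause V S := fun v => {x | v ∈ I ∧ x = a v}

lemma cvars_eqClause (a : ∀ v, S v) (I : Set V) : cvars (eqClause a I) = I := by
  ext v
  simp [cvars, eqClause, Set.eq_empty_iff_forall_notMem]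

lemma eqClause_mono (a : ∀ v, S v) {I J : Set V} (h : I ⊆ J) (v : V) :
    eqClause a I v ⊆ eqClause a J v :=
  fun _ hx => ⟨h hx.1, hx.2⟩

lemma csat_mono {c c' : Clause V S} (h : ∀ v, c v ⊆ c' v) {w : ∀ v, S v} (hc : csat c w) :
    csat c' w :=
  let ⟨v, hv⟩ := hc
  ⟨v, h v hv⟩

lemma exists_not_csat_of_not_cvalid {c : Clause V S} (h : ¬ cvalid c) :
    ∃ w : ∀ v, S v, ∀ v, w v ∉ c v := by
  simpa [cvalid, csat] using h

end Clause

namespace NNF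

variable {V : Type} {S : V → Type}

lemma vars_finite (Δ : NNF V S) : Δ.vars.Finite := by
  induction Δ with
  | tru | fls => exact Set.finite_empty
  | lit X s => exact Set.finite_singleton X
  | conj a b iha ihb | disj a b iha ihb => exact iha.union ihb

lemma sat_congr (Δ : NNF V S) {w w' : ∀ v, S v} (h : ∀ v ∈ Δ.vars, w v = w' v) :
    Δ.sat w ↔ Δ.sat w' := by
  induction Δ with
  | tru | fls => exact Iff.rfl
  | lit X s => exact iff_of_eq (congrArg (· ∈ s) (h X rfl))
  | conj a b iha ihb | disj a b iha ihb =>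
      simp only [sat]
      rw [iha fun v hv => h v (Or.inl hv), ihb fun v hv => h v (Or.inr hv)]

lemma exists_lit_of_mem_vars (Δ : NNF V S) {X : V} (h : X ∈ Δ.vars) :
    ∃ s, (⟨X, s⟩ : Σ X : V, Set (S X)) ∈ Δ.lits := by
  induction Δ with
  | tru | fls => exact absurd h (Set.notMem_empty X)
  | lit Y s =>
      obtain rfl : X = Y := h
      exact ⟨s, rfl⟩
  | conj a b iha ihb | disj a b iha ihb =>
      rcases h with h | h
      · obtain ⟨s, hs⟩ := iha h
        exact ⟨s, Or.inl hs⟩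
      · obtain ⟨s, hs⟩ := ihb h
        exact ⟨s, Or.inr hs⟩

def IsMonotoneAt (Δ : NNF V S) (a : ∀ v, S v) : Prop :=
  ∀ X s, (⟨X, s⟩ : Σ X : V, Set (S X)) ∈ Δ.lits → s = {a X}

lemma IsMonotoneAt.mono {Γ Δ : NNF V S} {a : ∀ v, S v} (h : Δ.IsMonotoneAt a)
    (hΓ : Γ.lits ⊆ Δ.lits) : Γ.IsMonotoneAt a :=
  fun X s hs => h X s (hΓ hs)

lemma IsMonotone.exists_isMonotoneAt [∀ v, Nonempty (S v)] {Δ : NNF V S} (h : Δ.IsMonotone) :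
    ∃ a, Δ.IsMonotoneAt a := by
  have : ∀ X, ∃ aX : S X, ∀ s, (⟨X, s⟩ : Σ X : V, Set (S X)) ∈ Δ.lits → s = {aX} := by
    intro X
    by_cases hX : ∃ s, (⟨X, s⟩ : Σ X : V, Set (S X)) ∈ Δ.lits
    · obtain ⟨s, hs⟩ := hX
      obtain ⟨⟨aX, rfl⟩, huniq⟩ := h X s hs
      exact ⟨aX, huniq⟩
    · exact ⟨Classical.arbitrary _, fun s hs => absurd ⟨s, hs⟩ hX⟩
  choose a ha using this
  exact ⟨a, ha⟩

lemma IsMonotoneAt.exists_ne {Δ : NNF V S} {a : ∀ v, S v} (ha : Δ.IsMonotoneAt a)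
    (hwf : ∀ p ∈ Δ.lits, p.2 ≠ Set.univ) : ∃ b : ∀ v, S v, ∀ v ∈ Δ.vars, b v ≠ a v := by
  have : ∀ X, ∃ y : S X, X ∈ Δ.vars → y ≠ a X := by
    intro X
    by_cases hX : X ∈ Δ.vars
    · obtain ⟨s, hs⟩ := Δ.exists_lit_of_mem_vars hX
      have hne := hwf _ hs
      rw [ha X s hs] at hne
      obtain ⟨y, hy⟩ := (Set.ne_univ_iff_exists_notMem _).mp hne
      exact ⟨y, fun _ => hy⟩
    · exact ⟨a X, fun h => absurd h hX⟩
  choose b hb using this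
  exact ⟨b, hb⟩

theorem rob_le_ncard_of_not_sat {Δ : NNF V S} {a : ∀ v, S v} (ha : Δ.IsMonotoneAt a)
    (hdec : Δ.IsDecomposable) {w : ∀ v, S v} (hw : ¬ Δ.sat w) :
    Δ.rob ≤ ((Δ.vars ∩ {v | w v ≠ a v}).ncard : ℕ∞) := by
  induction Δ with
  | tru => exact absurd trivial hw
  | fls => exact zero_le
  | lit X s =>
      have hX : w X ≠ a X := fun h => hw (by simp [sat, ha X s rfl, h])
      simp [rob, vars, Set.singleton_inter_of_mem (show X ∈ {v | w v ≠ a v} from hX)]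
  | conj α β ihα ihβ =>
      have hfin := ((conj α β).vars_finite.inter_of_left {v | w v ≠ a v})
      rcases not_and_or.mp hw with hw | hw
      · calc (conj α β).rob ≤ α.rob := min_le_left _ _
          _ ≤ _ := ihα (ha.mono Set.subset_union_left) hdec.1 hw
          _ ≤ _ := by
            exact_mod_cast
              Set.ncard_le_ncard (Set.inter_subset_inter_left _ Set.subset_union_left) hfin
      · calc (conj α β).rob ≤ β.rob := min_le_right _ _
          _ ≤ _ := ihβ (ha.mono Set.subset_union_right) hdec.2 hw
          _ ≤ _ := by
            exact_mod_cast
              Set.ncard_le_ncard (Set.inter_subset_inter_left _ Set.subset_union_right) hfin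
  | disj α β ihα ihβ =>
      obtain ⟨hwα, hwβ⟩ := not_or.mp hw
      have hdisj : Disjoint (α.vars ∩ {v | w v ≠ a v}) (β.vars ∩ {v | w v ≠ a v}) :=
        (Set.disjoint_iff_inter_eq_empty.mpr hdec.2.2).mono Set.inter_subset_left
          Set.inter_subset_left
      calc (disj α β).rob = α.rob + β.rob := rfl
        _ ≤ _ + _ := add_le_add (ihα (ha.mono Set.subset_union_left) hdec.1 hwα)
            (ihβ (ha.mono Set.subset_union_right) hdec.2.1 hwβ)
        _ = _ := by
          rw [vars, Set.union_inter_distrib_right, Set.ncard_union_eq hdisj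
            (α.vars_finite.inter_of_left _) (β.vars_finite.inter_of_left _)]
          push_cast
          rfl

theorem exists_ncard_le_rob {Δ : NNF V S} {a : ∀ v, S v} (ha : Δ.IsMonotoneAt a)
    (htop : Δ.rob ≠ ⊤) :
    ∃ I ⊆ Δ.vars, (I.ncard : ℕ∞) ≤ Δ.rob ∧ ∀ w, Δ.sat w → csat (eqClause a I) w := by
  induction Δ with
  | tru => exact absurd rfl htop
  | fls => exact ⟨∅, Set.empty_subset _, by simp, fun w hw => hw.elim⟩
  | lit X s =>
      refine ⟨{X}, subset_rfl, by simp [rob], fun w hw => ⟨X, rfl, ?_⟩⟩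
      simpa [sat, ha X s rfl] using hw
  | conj α β ihα ihβ =>
      rcases min_choice α.rob β.rob with h | h
      · obtain ⟨I, hI, hcard, hent⟩ := ihα (ha.mono Set.subset_union_left) (h ▸ htop)
        exact ⟨I, hI.trans Set.subset_union_left, hcard.trans_eq h.symm,
          fun w hw => hent w hw.1⟩
      · obtain ⟨I, hI, hcard, hent⟩ := ihβ (ha.mono Set.subset_union_right) (h ▸ htop)
        exact ⟨I, hI.trans Set.subset_union_right, hcard.trans_eq h.symm,
          fun w hw => hent w hw.2⟩
  | disj α β ihα ihβ =>
      obtain ⟨htopα, htopβ⟩ := WithTop.add_ne_top.mp htop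
      obtain ⟨I, hI, hIcard, hIent⟩ := ihα (ha.mono Set.subset_union_left) htopα
      obtain ⟨J, hJ, hJcard, hJent⟩ := ihβ (ha.mono Set.subset_union_right) htopβ
      refine ⟨I ∪ J, Set.union_subset_union hI hJ, ?_, ?_⟩
      · calc ((I ∪ J).ncard : ℕ∞) ≤ I.ncard + J.ncard := by
              exact_mod_cast Set.ncard_union_le I J
          _ ≤ α.rob + β.rob := add_le_add hIcard hJcard
      · rintro w (hw | hw)
        · exact csat_mono (eqClause_mono a Set.subset_union_left) (hIent w hw)
        · exact csat_mono (eqClause_mono a Set.subset_union_right) (hJent w hw)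

end NNF

section Implicates

variable {V : Type} {S : V → Type}

theorem PrimeImplicate.cvars_subset_vars {Δ : NNF V S} {c : Clause V S}
    (hc : PrimeImplicate Δ c) : cvars c ⊆ Δ.vars := by
  classical
  obtain ⟨⟨hnv, hent⟩, hprime⟩ := hc
  obtain ⟨w₀, hw₀⟩ := exists_not_csat_of_not_cvalid hnv
  intro Y hY
  by_contra hYΔ
  set c' : Clause V S := fun v => {x | x ∈ c v ∧ v ≠ Y}
  have hc'c : ∀ v, c' v ⊆ c v := fun _ _ hx => hx.1
  -- Resetting `Y` to `w₀ Y ∉ c Y` does not affect `Δ`, so `c` stays true through another variable.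
  have hc' : Implicate Δ c' := by
    refine ⟨fun hval => ?_, fun w hw => ?_⟩
    · obtain ⟨v, hv⟩ := hval w₀
      exact hw₀ v (hc'c v hv)
    · have hw' : Δ.sat (Function.update w Y (w₀ Y)) :=
        (Δ.sat_congr fun v hv => (Function.update_of_ne (ne_of_mem_of_not_mem hv hYΔ) _ _).symm).mp hw
      obtain ⟨v, hv⟩ := hent _ hw'
      have hvY : v ≠ Y := by
        rintro rfl
        exact hw₀ v (by simpa using hv)
      exact ⟨v, by simpa [hvY] using hv, hvY⟩
  obtain ⟨x, hx⟩ := Set.nonempty_iff_ne_empty.mpr hY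
  obtain ⟨v, hv⟩ := hprime c' hc' (fun w => csat_mono hc'c) (Function.update w₀ Y x)
    ⟨Y, by simpa using hx⟩
  have hvY : v ≠ Y := hv.2
  exact hw₀ v (by simpa [hvY] using hv.1)

theorem NNF.rob_le_ncard_cvars {Δ : NNF V S} {a : ∀ v, S v} (ha : Δ.IsMonotoneAt a)
    (hdec : Δ.IsDecomposable) {c : Clause V S} (hc : Implicate Δ c) (hcΔ : cvars c ⊆ Δ.vars) :
    Δ.rob ≤ ((cvars c).ncard : ℕ∞) := by
  classical
  obtain ⟨w₀, hw₀⟩ := exists_not_csat_of_not_cvalid hc.1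
  set w : ∀ v, S v := fun v => if v ∈ cvars c then w₀ v else a v
  have hw : ¬ csat c w := by
    rintro ⟨v, hv⟩
    by_cases h : v ∈ cvars c
    · exact hw₀ v (by simpa [w, h] using hv)
    · simp_all [w, cvars]
  have hdev : Δ.vars ∩ {v | w v ≠ a v} ⊆ cvars c := fun v hv => by
    by_contra h
    exact hv.2 (if_neg h)
  calc Δ.rob ≤ _ := Δ.rob_le_ncard_of_not_sat ha hdec fun h => hw (hc.2 w h)
    _ ≤ _ := by exact_mod_cast Set.ncard_le_ncard hdev (Δ.vars_finite.subset hcΔ)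

theorem NNF.primeImplicate_eqClause {Δ : NNF V S} {a b : ∀ v, S v} {I : Set V}
    (hb : ∀ v ∈ I, b v ≠ a v)
    (hI : Minimal (fun J => ∀ w, Δ.sat w → csat (eqClause a J) w) I) :
    PrimeImplicate Δ (eqClause a I) := by
  classical
  refine ⟨⟨fun hval => ?_, hI.1⟩, fun c hc hcI => ?_⟩
  · obtain ⟨v, hvI, hv⟩ := hval b
    exact hb v hvI hv
  -- `b` falsifies `eqClause a I`, so testing `c` at `b` updated in one variable confines `c`:
  have hsub : ∀ v, c v ⊆ eqClause a I v := by
    intro v x hx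
    obtain ⟨u, huI, hu⟩ := hcI (Function.update b v x) ⟨v, by simpa using hx⟩
    rcases eq_or_ne u v with rfl | huv
    · exact ⟨huI, by simpa using hu⟩
    · exact absurd (by simpa [huv] using hu) (hb u huI)
  have hcvars : cvars c ⊆ I := fun v hv => by
    obtain ⟨x, hx⟩ := Set.nonempty_iff_ne_empty.mpr hv
    exact (hsub v hx).1
  have hIc : I ⊆ cvars c := by
    refine hI.2 (fun w hw => ?_) hcvars
    obtain ⟨v, hv⟩ := hc.2 w hw
    exact ⟨v, Set.nonempty_iff_ne_empty.mp ⟨_, hv⟩, (hsub v hv).2⟩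
  rintro w ⟨v, hvI, hv⟩
  obtain ⟨x, hx⟩ := Set.nonempty_iff_ne_empty.mpr (hIc hvI)
  exact ⟨v, by rwa [hv, ← (hsub v hx).2]⟩

end Implicates

/-- For a monotone, or-decomposable NNF `Δ` (with well-formed literals),
`rob Δ` equals the minimum number of variables in any prime implicate of `Δ`
(`∞`, i.e. the empty infimum, if `Δ` is valid; `0` if `Δ` is unsatisfiable). -/
theorem stmt6 {V : Type} {S : V → Type} [∀ v, Nonempty (S v)]
    (Δ : NNF V S)
    (hwf : ∀ p : Σ X : V, Set (S X), p ∈ Δ.lits → p.2 ≠ ∅ ∧ p.2 ≠ Set.univ)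
    (hmono : Δ.IsMonotone) (hdec : Δ.IsDecomposable) :
    Δ.rob = ⨅ (c : Clause V S) (_ : PrimeImplicate Δ c), ((cvars c).ncard : ℕ∞) := by
  obtain ⟨a, ha⟩ := hmono.exists_isMonotoneAt
  obtain ⟨b, hb⟩ := ha.exists_ne fun p hp => (hwf p hp).2
  refine le_antisymm (le_iInf₂ fun c hc => Δ.rob_le_ncard_cvars ha hdec hc.1
    hc.cvars_subset_vars) ?_
  by_cases htop : Δ.rob = ⊤
  · exact htop ▸ le_top
  obtain ⟨I₀, hI₀Δ, hI₀, hI₀ent⟩ := Δ.exists_ncard_le_rob ha htop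
  obtain ⟨I, hII₀, hI⟩ := (Δ.vars_finite.subset hI₀Δ).exists_subset_minimal
    (P := fun J => ∀ w, Δ.sat w → csat (eqClause a J) w) hI₀ent
  calc ⨅ (c : Clause V S) (_ : PrimeImplicate Δ c), ((cvars c).ncard : ℕ∞)
      ≤ ((cvars (eqClause a I)).ncard : ℕ∞) :=
        iInf₂_le _ (Δ.primeImplicate_eqClause (fun v hv => hb v (hI₀Δ (hII₀ hv))) hI)
    _ = I.ncard := by rw [cvars_eqClause]
    _ ≤ I₀.ncard := by
        exact_mod_cast Set.ncard_le_ncard hII₀ (Δ.vars_finite.subset hI₀Δ)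
    _ ≤ Δ.rob := hI₀
end

section
/- Let I be an instance (a full assignment of states to all variables) with class formula Δ (so I ⊨ Δ), and let I' be a shortest flip of the decision on I, i.e., I' ⊭ Δ and no instance I'' with I'' ⊭ Δ differs from I on strictly fewer variables than I' does. Then the robustness of the decision on I, defined as |Dvars(I, I')|, equals the minimum over all prime implicates σ of the complete reason for the decision of the number of variables of σ, assuming: (a) every prime implicate σ of the complete reason admits a σ-violation that flips the decision, and (b) every shortest flip I' is a σ-violation of I for some prime implicate σ of the complete reason. -/
/-- The set of variables on which two instances disagree. -/
def dvars {V : Type} {S : V → Type} (I I' : ∀ v, S v) : Set V := {v | I v ≠ I' v}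

/-- `I'` is a `σ`-violation of `I`: `vars(σ) = Dvars(I, I')` and `I' ⊭ σ`. -/
def violation {V : Type} {S : V → Type} (I : ∀ v, S v) (σ : Clause V S) (I' : ∀ v, S v) :
    Prop :=
  cvars σ = dvars I I' ∧ ¬ csat σ I'

/-- Let `I' ` be a shortest flip of the decision on `I` (with class formula `Δ`, `I ⊨ Δ`).
Then the robustness `|Dvars(I, I')|` equals the minimum number of variables over all prime
implicates of the complete reason (the necessary reasons, abstracted as the family `NR` of
clauses implied by `I`), assuming (a) every `σ ∈ NR` admits a `σ`-violation that flips the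
decision, and (b) every shortest flip is a `σ`-violation for some `σ ∈ NR`. -/
theorem stmt7 {V : Type} [Fintype V] {S : V → Type}
    (Δ : (∀ v, S v) → Prop) (I : ∀ v, S v) (hI : Δ I)
    (NR : Set (Clause V S))
    (hNRfix : ∀ σ ∈ NR, ∀ v : V, σ v ≠ ∅ → I v ∈ σ v)
    (hNRsat : ∀ σ ∈ NR, csat σ I)
    (ha : ∀ σ ∈ NR, ∃ I'' : ∀ v, S v, violation I σ I'' ∧ ¬ Δ I'')
    (hb : ∀ I'' : ∀ v, S v, ¬ Δ I'' →
      (∀ J : ∀ v, S v, ¬ Δ J → (dvars I I'').ncard ≤ (dvars I J).ncard) →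
      ∃ σ ∈ NR, violation I σ I'')
    (I' : ∀ v, S v) (hflip : ¬ Δ I')
    (hshort : ∀ J : ∀ v, S v, ¬ Δ J → (dvars I I').ncard ≤ (dvars I J).ncard) :
    (dvars I I').ncard = sInf {n : ℕ | ∃ σ ∈ NR, n = (cvars σ).ncard} := by
  obtain ⟨σ, hσ, hviol⟩ := hb I' hflip hshort
  apply le_antisymm
  · have hne : {n : ℕ | ∃ σ ∈ NR, n = (cvars σ).ncard}.Nonempty :=
      ⟨(cvars σ).ncard, σ, hσ, rfl⟩
    apply le_csInf hne
    rintro n ⟨τ, hτ, rfl⟩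
    obtain ⟨I'', ⟨hveq, _⟩, hI''⟩ := ha τ hτ
    rw [hveq]
    exact hshort I'' hI''
  · exact Nat.sInf_le ⟨σ, hσ, by rw [hviol.1]⟩
end

section
/- Suppose every necessary reason (NR) σ for a decision admits at least one σ-violation that flips the decision, and every shortest flip of the decision is a σ-violation of some NR σ. Then the robustness of the decision (the minimum number of variables changed by any flip) equals the minimum number of variables mentioned in any NR. -/
/-- Suppose every NR `σ` admits at least one `σ`-violation that flips the decision, and
every shortest flip is a `σ`-violation of some NR `σ`. Then the robustness of the decision
(the cost `|Dvars(I, I')|` of a shortest flip `I'`) equals the minimum number of variables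
mentioned in any NR. -/
theorem stmt18 {V : Type} [Fintype V] {S : V → Type}
    (Δ : (∀ v, S v) → Prop) (I : ∀ v, S v) (hI : Δ I)
    (NR : Set (Clause V S)) (hne : NR.Nonempty)
    (hNRnv : ∀ σ ∈ NR, ¬ cvalid σ)
    (hNRfix : ∀ σ ∈ NR, ∀ v : V, σ v ≠ ∅ → I v ∈ σ v)
    (hNRsat : ∀ σ ∈ NR, csat σ I)
    (hLemma : ∀ σ ∈ NR, ∃ I'' : ∀ v, S v, violation I σ I'' ∧ ¬ Δ I'')
    (hProp : ∀ I'' : ∀ v, S v, ¬ Δ I'' →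
      (∀ J : ∀ v, S v, ¬ Δ J → (dvars I I'').ncard ≤ (dvars I J).ncard) →
      ∃ σ ∈ NR, violation I σ I'')
    (I' : ∀ v, S v) (hflip : ¬ Δ I')
    (hshort : ∀ J : ∀ v, S v, ¬ Δ J → (dvars I I').ncard ≤ (dvars I J).ncard) :
    (dvars I I').ncard = sInf {n : ℕ | ∃ σ ∈ NR, n = (cvars σ).ncard} := by
  obtain ⟨σ, hσ, hvio⟩ := hProp I' hflip hshort
  apply le_antisymm
  · refine le_csInf ⟨(cvars σ).ncard, σ, hσ, rfl⟩ ?_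
    rintro n ⟨τ, hτ, rfl⟩
    obtain ⟨I'', ⟨hveq, _⟩, hflip''⟩ := hLemma τ hτ
    rw [hveq]
    exact hshort I'' hflip''
  · exact csInf_le (OrderBot.bddBelow _) ⟨σ, hσ, by rw [hvio.1]⟩
end

section
/- The set {vars(σ) : σ is a shortest NR} equals the set {vars(σ) : σ is a shortest GNR}, under the hypotheses: every shortest flip is a σ-violation of some shortest NR and of some shortest GNR; every NR σ admits a σ-violation that is a flip; every σ-violation of a GNR σ is a flip; and a σ-violation I' of σ satisfies |Dvars(I,I')| = |vars(σ)|. -/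
/-- `I'` is a shortest flip of the decision on `I`. -/
def ShortestFlip {V : Type} [Fintype V] {S : V → Type}
    (Δ : (∀ v, S v) → Prop) (I I' : ∀ v, S v) : Prop :=
  ¬ Δ I' ∧ ∀ J : ∀ v, S v, ¬ Δ J → (dvars I I').ncard ≤ (dvars I J).ncard

/-- `σ` is a shortest member of the family `F` (minimum number of variables). -/
def ShortestIn {V : Type} [Fintype V] {S : V → Type}
    (F : Set (Clause V S)) (σ : Clause V S) : Prop :=
  σ ∈ F ∧ ∀ σ' ∈ F, (cvars σ).ncard ≤ (cvars σ').ncard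

/-- `{vars(σ) : σ a shortest NR} = {vars(σ) : σ a shortest GNR}`, under the hypotheses:
every shortest flip is a `σ`-violation of some shortest NR and of some shortest GNR;
every NR `σ` admits a `σ`-violation that is a flip; every `σ`-violation of a GNR `σ`
is a flip. (That a `σ`-violation `I'` satisfies `|Dvars(I,I')| = |vars σ|` is definitional.) -/
theorem stmt19 {V : Type} [Fintype V] {S : V → Type}
    (Δ : (∀ v, S v) → Prop) (I : ∀ v, S v) (hI : Δ I)
    (hflip : ∃ I₀ : ∀ v, S v, ¬ Δ I₀)
    (NR GNR : Set (Clause V S)) (hNRne : NR.Nonempty) (hGNRne : GNR.Nonempty)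
    (hNRwf : ∀ σ ∈ NR, ¬ cvalid σ ∧ ∀ v : V, σ v ≠ ∅ → I v ∈ σ v)
    (hGNRwf : ∀ σ ∈ GNR, ¬ cvalid σ ∧ ∀ v : V, σ v ≠ ∅ → I v ∈ σ v)
    (hSFNR : ∀ I' : ∀ v, S v, ShortestFlip Δ I I' →
      ∃ σ : Clause V S, ShortestIn NR σ ∧ violation I σ I')
    (hSFGNR : ∀ I' : ∀ v, S v, ShortestFlip Δ I I' →
      ∃ σ : Clause V S, ShortestIn GNR σ ∧ violation I σ I')
    (hNRviol : ∀ σ ∈ NR, ∃ I' : ∀ v, S v, violation I σ I' ∧ ¬ Δ I')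
    (hGNRflip : ∀ σ ∈ GNR, ∀ I' : ∀ v, S v, violation I σ I' → ¬ Δ I') :
    cvars '' {σ : Clause V S | ShortestIn NR σ} =
      cvars '' {σ : Clause V S | ShortestIn GNR σ} := by
  classical
  -- shortest flip exists
  obtain ⟨I₀, hI₀⟩ := hflip
  have hP : ∃ n, ∃ J : ∀ v, S v, ¬ Δ J ∧ (dvars I J).ncard = n := ⟨_, I₀, hI₀, rfl⟩
  obtain ⟨J₀, hJ₀, hJ₀n⟩ := Nat.find_spec hP
  set f := Nat.find hP with hf
  have hfmin : ∀ J : ∀ v, S v, ¬ Δ J → f ≤ (dvars I J).ncard := by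
    intro J hJ
    exact Nat.find_min' hP ⟨J, hJ, rfl⟩
  have hSF : ShortestFlip Δ I J₀ := by
    refine ⟨hJ₀, fun J hJ => ?_⟩
    rw [hJ₀n]; exact hfmin J hJ
  obtain ⟨σN, hσN, hvN⟩ := hSFNR J₀ hSF
  obtain ⟨σG, hσG, hvG⟩ := hSFGNR J₀ hSF
  have hσNsize : (cvars σN).ncard = f := by rw [hvN.1, hJ₀n]
  have hσGsize : (cvars σG).ncard = f := by rw [hvG.1, hJ₀n]
  -- a flip whose disagreement size is ≤ f is a shortest flip
  have shortOf : ∀ I' : ∀ v, S v, ¬ Δ I' → (dvars I I').ncard ≤ f →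
      ShortestFlip Δ I I' := by
    intro I' h1 h2
    exact ⟨h1, fun J hJ => le_trans h2 (hfmin J hJ)⟩
  ext s
  constructor
  · rintro ⟨σ, hσ, rfl⟩
    obtain ⟨I', ⟨hvars, _⟩, hI'⟩ := hNRviol σ hσ.1
    have hle : (dvars I I').ncard ≤ f := by
      rw [← hvars, ← hσNsize]; exact hσ.2 σN hσN.1
    obtain ⟨τ, hτ, hvτ⟩ := hSFGNR I' (shortOf I' hI' hle)
    exact ⟨τ, hτ, by rw [hvτ.1, ← hvars]⟩
  · rintro ⟨τ, hτ, rfl⟩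
    -- construct a τ-violation
    obtain ⟨hnv, hwf⟩ := hGNRwf τ hτ.1
    rw [cvalid, not_forall] at hnv
    obtain ⟨w, hw⟩ := hnv
    have hw' : ∀ v, w v ∉ τ v := by
      intro v hv; exact hw ⟨v, hv⟩
    set I' : ∀ v, S v := fun v => if τ v = ∅ then I v else w v with hI'def
    have hviol : violation I τ I' := by
      constructor
      · ext v
        simp only [cvars, dvars, Set.mem_setOf_eq, hI'def]
        constructor
        · intro h
          simp only [if_neg h]
          intro heq
          exact hw' v (heq ▸ hwf v h)
        · intro h hempty
          apply h; simp [if_pos hempty]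
      · rintro ⟨v, hv⟩
        by_cases h : τ v = ∅
        · rw [h] at hv; exact hv
        · simp only [hI'def, if_neg h] at hv
          exact hw' v hv
    have hI' : ¬ Δ I' := hGNRflip τ hτ.1 I' hviol
    have hle : (dvars I I').ncard ≤ f := by
      rw [← hviol.1, ← hσGsize]; exact hτ.2 σG hσG.1
    obtain ⟨σ, hσ, hvσ⟩ := hSFNR I' (shortOf I' hI' hle)
    exact ⟨σ, hσ, by rw [hvσ.1, ← hviol.1]⟩
end
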